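/- arXiv:1902.03778 — 2 statements merged into one kernel-verified Lean document; each statement's English description precedes it below -/
import Mathlib

section
/- For quadratic data (V,R) and (W,S) with R ⊆ V⊗V and S ⊆ W⊗W, the quadratic associative algebras satisfy T(V)/(R) ⊗ T(W)/(S) ≅ T(V⊕W)/(R ⊕ [V,W]₋ ⊕ S), where [V,W]₋ ⊆ (V⊕W)⊗(V⊕W) is spanned by the elements v⊗w - w⊗v for v∈V, w∈W. -/
open TensorProduct

variable (K : Type*) [Field K]

/-- The canonical linear map `V ⊗ V → T(V)`, `x ⊗ y ↦ x · y`. -/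
noncomputable def tensorSquareToTensorAlgebra (V : Type*) [AddCommGroup V] [Module K V] :
    V ⊗[K] V →ₗ[K] TensorAlgebra K V :=
  (LinearMap.mul' K (TensorAlgebra K V)).comp
    (TensorProduct.map (TensorAlgebra.ι K) (TensorAlgebra.ι K))

/-- The relation killing (the image in `T(V)` of) a subspace `W ⊆ V ⊗ V`; its `RingQuot` is
the quadratic algebra `T(V)/(W)`. -/
def quadRel (V : Type*) [AddCommGroup V] [Module K V] (W : Submodule K (V ⊗[K] V)) :
    TensorAlgebra K V → TensorAlgebra K V → Prop :=
  fun a b => b = 0 ∧ a ∈ Submodule.map (tensorSquareToTensorAlgebra K V) W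

/-- The quadratic associative algebra `T(V)/(R)`. -/
noncomputable abbrev QuadAlg (V : Type*) [AddCommGroup V] [Module K V]
    (R : Submodule K (V ⊗[K] V)) :=
  RingQuot (quadRel K V R)

/-- The subspace `[V, W]₋ ⊆ (V ⊕ W) ⊗ (V ⊕ W)` spanned by the elements
`v ⊗ w - w ⊗ v` for `v ∈ V`, `w ∈ W`. -/
noncomputable def commMinusSpan (V W : Type*) [AddCommGroup V] [Module K V]
    [AddCommGroup W] [Module K W] : Submodule K ((V × W) ⊗[K] (V × W)) :=
  Submodule.span K {z | ∃ (v : V) (w : W),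
    z = (LinearMap.inl K V W v) ⊗ₜ[K] (LinearMap.inr K V W w)
      - (LinearMap.inr K V W w) ⊗ₜ[K] (LinearMap.inl K V W v)}

/-!
Maps out of a quadratic algebra `T(V)/(R)` are linear maps on `V` whose induced map
`V ⊗ V → A`, `x ⊗ y ↦ φ x * φ y`, kills `R`. The inclusions of `V` and `W` into `V × W` thus give
algebra maps into `T(V ⊕ W)/(R ⊕ [V,W]₋ ⊕ S)` whose images commute, because the relations
`[V,W]₋` make the generators commute; hence a map out of the tensor product. Conversely
`(v, w) ↦ v ⊗ 1 + 1 ⊗ w` kills `R`, `S` and `[V,W]₋`. Both composites fix the generators.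
-/

variable {K}

section QuadraticRelations

variable {U V : Type*} [AddCommGroup U] [Module K U] [AddCommGroup V] [Module K V]
  {A B : Type*} [Semiring A] [Algebra K A] [Semiring B] [Algebra K B]

def quadRelations (φ : V →ₗ[K] A) : Submodule K (V ⊗[K] V) :=
  LinearMap.ker (LinearMap.mul' K A ∘ₗ TensorProduct.map φ φ)

theorem quadRelations_comp (φ : V →ₗ[K] A) (f : U →ₗ[K] V) :
    quadRelations (φ ∘ₗ f) = (quadRelations φ).comap (TensorProduct.map f f) := by
  rw [quadRelations, quadRelations, TensorProduct.map_comp, ← LinearMap.comp_assoc,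
    LinearMap.ker_comp]

theorem quadRelations_le_algHom_comp (g : A →ₐ[K] B) (φ : V →ₗ[K] A) :
    quadRelations φ ≤ quadRelations (g.toLinearMap ∘ₗ φ) := by
  rw [quadRelations, quadRelations, TensorProduct.map_comp, ← LinearMap.comp_assoc,
    ← AlgHom.comp_mul', LinearMap.comp_assoc]
  exact LinearMap.ker_le_ker_comp _ _

theorem quadRelations_algHom_comp_ι (f : TensorAlgebra K V →ₐ[K] A) :
    quadRelations (f.toLinearMap ∘ₗ TensorAlgebra.ι K) =
      LinearMap.ker (f.toLinearMap ∘ₗ tensorSquareToTensorAlgebra K V) := by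
  rw [quadRelations, tensorSquareToTensorAlgebra, ← LinearMap.comp_assoc, AlgHom.comp_mul',
    LinearMap.comp_assoc, TensorProduct.map_comp]

end QuadraticRelations

namespace QuadAlg

variable {V V' : Type*} [AddCommGroup V] [Module K V] [AddCommGroup V'] [Module K V']
  (R : Submodule K (V ⊗[K] V)) {A : Type*} [Semiring A] [Algebra K A]

noncomputable def ι : V →ₗ[K] QuadAlg K V R :=
  (RingQuot.mkAlgHom K (quadRel K V R)).toLinearMap ∘ₗ TensorAlgebra.ι K

theorem le_quadRelations_ι : R ≤ quadRelations (ι R) := by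
  intro x hx
  rw [ι, quadRelations_algHom_comp_ι, LinearMap.mem_ker, LinearMap.comp_apply,
    AlgHom.toLinearMap_apply, RingQuot.mkAlgHom_rel K ⟨rfl, x, hx, rfl⟩, map_zero]

noncomputable def lift (φ : V →ₗ[K] A) (h : R ≤ quadRelations φ) : QuadAlg K V R →ₐ[K] A :=
  RingQuot.liftAlgHom K ⟨TensorAlgebra.lift K φ, by
    rintro _ _ ⟨rfl, x, hx, rfl⟩
    have hx' := h hx
    rw [← TensorAlgebra.ι_comp_lift φ, quadRelations_algHom_comp_ι] at hx'
    exact hx'.trans (map_zero _).symm⟩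

@[simp] theorem lift_ι (φ : V →ₗ[K] A) (h : R ≤ quadRelations φ) (v : V) :
    lift R φ h (ι R v) = φ v := by
  simp [lift, ι, RingQuot.liftAlgHom_mkAlgHom_apply]

variable {R} in
@[ext high] theorem hom_ext {f g : QuadAlg K V R →ₐ[K] A}
    (h : f.toLinearMap ∘ₗ ι R = g.toLinearMap ∘ₗ ι R) : f = g :=
  RingQuot.ringQuot_ext' K f g (TensorAlgebra.hom_ext h)

theorem induction {C : QuadAlg K V R → Prop} (algebraMap : ∀ r, C (algebraMap K _ r))
    (ι : ∀ v, C (ι R v)) (mul : ∀ a b, C a → C b → C (a * b))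
    (add : ∀ a b, C a → C b → C (a + b)) (a : QuadAlg K V R) : C a := by
  obtain ⟨t, rfl⟩ := RingQuot.mkAlgHom_surjective K _ a
  induction t using TensorAlgebra.induction with
  | algebraMap r => simpa using algebraMap r
  | ι v => exact ι v
  | mul a b ha hb => simpa using mul _ _ ha hb
  | add a b ha hb => simpa using add _ _ ha hb

variable {R} in
theorem commute_of_forall_commute_ι {f : QuadAlg K V R →ₐ[K] A} {c : A}
    (h : ∀ v, Commute (f (ι R v)) c) (a : QuadAlg K V R) : Commute (f a) c := by
  induction a using induction with
  | algebraMap r => rw [AlgHom.commutes]; exact Algebra.commute_algebraMap_left r c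
  | ι v => exact h v
  | mul a b ha hb => simpa using ha.mul_left hb
  | add a b ha hb => simpa using ha.add_left hb

noncomputable def map {R' : Submodule K (V' ⊗[K] V')} (f : V →ₗ[K] V')
    (h : R.map (TensorProduct.map f f) ≤ R') : QuadAlg K V R →ₐ[K] QuadAlg K V' R' :=
  lift R (ι R' ∘ₗ f) <| by
    rw [quadRelations_comp]
    exact Submodule.map_le_iff_le_comap.1 (h.trans (le_quadRelations_ι R'))

@[simp] theorem map_ι {R' : Submodule K (V' ⊗[K] V')} (f : V →ₗ[K] V')
    (h : R.map (TensorProduct.map f f) ≤ R') (v : V) : map R f h (ι R v) = ι R' (f v) :=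
  lift_ι _ _ _ v

end QuadAlg

section TensorProduct

open QuadAlg Algebra.TensorProduct

variable {V W : Type*} [AddCommGroup V] [Module K V] [AddCommGroup W] [Module K W]
  (R : Submodule K (V ⊗[K] V)) (S : Submodule K (W ⊗[K] W))

noncomputable def prodRelations : Submodule K ((V × W) ⊗[K] (V × W)) :=
  Submodule.map (TensorProduct.map (LinearMap.inl K V W) (LinearMap.inl K V W)) R
    ⊔ commMinusSpan K V W
    ⊔ Submodule.map (TensorProduct.map (LinearMap.inr K V W) (LinearMap.inr K V W)) S

theorem map_inl_le_prodRelations :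
    R.map (TensorProduct.map (LinearMap.inl K V W) (LinearMap.inl K V W)) ≤ prodRelations R S :=
  le_sup_left.trans le_sup_left

theorem commMinusSpan_le_prodRelations : commMinusSpan K V W ≤ prodRelations R S :=
  le_sup_right.trans le_sup_left

theorem map_inr_le_prodRelations :
    S.map (TensorProduct.map (LinearMap.inr K V W) (LinearMap.inr K V W)) ≤ prodRelations R S :=
  le_sup_right

theorem commute_ι_inl_ι_inr (v : V) (w : W) :
    Commute (ι (prodRelations R S) (LinearMap.inl K V W v))
      (ι (prodRelations R S) (LinearMap.inr K V W w)) := by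
  have hmem : (LinearMap.inl K V W v) ⊗ₜ[K] (LinearMap.inr K V W w)
      - (LinearMap.inr K V W w) ⊗ₜ[K] (LinearMap.inl K V W v) ∈ prodRelations R S :=
    commMinusSpan_le_prodRelations R S (Submodule.subset_span ⟨v, w, rfl⟩)
  simpa [quadRelations, sub_eq_zero, commute_iff_eq] using le_quadRelations_ι _ hmem

theorem commute_map_inl_map_inr (a : QuadAlg K V R) (b : QuadAlg K W S) :
    Commute (QuadAlg.map R (LinearMap.inl K V W) (map_inl_le_prodRelations R S) a)
      (QuadAlg.map S (LinearMap.inr K V W) (map_inr_le_prodRelations R S) b) := by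
  refine commute_of_forall_commute_ι
    (fun v => (commute_of_forall_commute_ι (fun w => ?_) b).symm) a
  simpa using (commute_ι_inl_ι_inr R S v w).symm

noncomputable def tensorToProd :
    QuadAlg K V R ⊗[K] QuadAlg K W S →ₐ[K] QuadAlg K (V × W) (prodRelations R S) :=
  Algebra.TensorProduct.lift _ _ (commute_map_inl_map_inr R S)

noncomputable def prodToTensor :
    QuadAlg K (V × W) (prodRelations R S) →ₐ[K] QuadAlg K V R ⊗[K] QuadAlg K W S :=
  QuadAlg.lift _ (LinearMap.coprod (includeLeft.toLinearMap ∘ₗ ι R)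
    (includeRight.toLinearMap ∘ₗ ι S)) <| by
    refine sup_le (sup_le ?_ ?_) ?_
    · rw [Submodule.map_le_iff_le_comap, ← quadRelations_comp, LinearMap.coprod_inl]
      exact (le_quadRelations_ι R).trans (quadRelations_le_algHom_comp _ _)
    · rw [commMinusSpan, Submodule.span_le]
      rintro _ ⟨v, w, rfl⟩
      simp only [quadRelations, SetLike.mem_coe, LinearMap.mem_ker, LinearMap.comp_apply,
        map_sub]
      simp
    · rw [Submodule.map_le_iff_le_comap, ← quadRelations_comp, LinearMap.coprod_inr]
      exact (le_quadRelations_ι S).trans (quadRelations_le_algHom_comp _ _)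

theorem tensorToProd_comp_prodToTensor :
    (tensorToProd R S).comp (prodToTensor R S) = AlgHom.id K _ := by
  ext <;> simp [tensorToProd, prodToTensor]

theorem prodToTensor_comp_tensorToProd :
    (prodToTensor R S).comp (tensorToProd R S) = AlgHom.id K _ := by
  ext <;> simp [tensorToProd, prodToTensor]

noncomputable def tensorEquiv :
    QuadAlg K V R ⊗[K] QuadAlg K W S ≃ₐ[K] QuadAlg K (V × W) (prodRelations R S) :=
  AlgEquiv.ofAlgHom _ _ (tensorToProd_comp_prodToTensor R S) (prodToTensor_comp_tensorToProd R S)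

end TensorProduct

/-- For quadratic data `(V, R)` and `(W, S)`, the quadratic associative
algebras satisfy `T(V)/(R) ⊗ T(W)/(S) ≅ T(V ⊕ W)/(R ⊕ [V,W]₋ ⊕ S)`, where
`[V,W]₋ ⊆ (V ⊕ W)⊗(V ⊕ W)` is spanned by the elements `v ⊗ w - w ⊗ v` for `v ∈ V`,
`w ∈ W`, and the tensor product of algebras carries the componentwise product. -/
theorem quadAlg_tensor_iso
    (V W : Type*) [AddCommGroup V] [Module K V] [AddCommGroup W] [Module K W]
    (R : Submodule K (V ⊗[K] V)) (S : Submodule K (W ⊗[K] W)) :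
    Nonempty ((QuadAlg K V R ⊗[K] QuadAlg K W S)
      ≃ₐ[K] QuadAlg K (V × W)
        (Submodule.map (TensorProduct.map (LinearMap.inl K V W) (LinearMap.inl K V W)) R
          ⊔ commMinusSpan K V W
          ⊔ Submodule.map (TensorProduct.map (LinearMap.inr K V W) (LinearMap.inr K V W)) S)) :=
  ⟨tensorEquiv R S⟩
end

section
/- Define the Drinfeld–Kohno Lie algebra t_n (n ≥ 2) as the Lie algebra over Q with generators t_{ij} = t_{ji} for 1 ≤ i < j ≤ n and relations [t_{ij}, t_{kl}] = 0 for {i,j} ∩ {k,l} = ∅ and [t_{ij}, t_{ik} + t_{jk}] = 0 for distinct i, j, k. Then the linear map ∘₁ given on generators of t_n as in the operadic insertion formula, t_{ij} ↦ t_{i+m-1,j+m-1} if 1 < i and t_{1j} ↦ Σ_{l=1}^{m} t_{l, j+m-1}, and on generators of t_m by t_{ij} ↦ t_{ij}, extends to a well-defined Lie algebra morphism ∘₁ : t_{n} ⊕ t_{m} → t_{n+m-1}. -/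
section ProdLie

variable (g h : Type*) [LieRing g] [LieRing h]

/-- The direct sum Lie ring `g ⊕ h`, with componentwise bracket. -/
instance Prod.lieRing : LieRing (g × h) where
  bracket x y := (⁅x.1, y.1⁆, ⁅x.2, y.2⁆)
  add_lie x y z := Prod.ext (add_lie x.1 y.1 z.1) (add_lie x.2 y.2 z.2)
  lie_add x y z := Prod.ext (lie_add x.1 y.1 z.1) (lie_add x.2 y.2 z.2)
  lie_self x := Prod.ext (lie_self x.1) (lie_self x.2)
  leibniz_lie x y z := Prod.ext (leibniz_lie x.1 y.1 z.1) (leibniz_lie x.2 y.2 z.2)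

/-- The direct sum Lie algebra `g ⊕ h` over `ℚ`. -/
instance Prod.lieAlgebra [LieAlgebra ℚ g] [LieAlgebra ℚ h] : LieAlgebra ℚ (g × h) where
  lie_smul c x y := Prod.ext (lie_smul c x.1 y.1) (lie_smul c x.2 y.2)

end ProdLie

/-- Generators `t_{ij}`, `1 ≤ i < j ≤ n`, of the Drinfeld–Kohno Lie algebra `t_n`. -/
def DKGen (n : ℕ) : Type := {p : ℕ × ℕ // 1 ≤ p.1 ∧ p.1 < p.2 ∧ p.2 ≤ n}

/-- The generator `t_{ij} = t_{ji}` of the free Lie algebra on the Drinfeld–Kohno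
generators (junk value `0` for out-of-range indices). -/
noncomputable def tFree (n : ℕ) (i j : ℕ) : FreeLieAlgebra ℚ (DKGen n) :=
  if h : 1 ≤ i ∧ i < j ∧ j ≤ n then FreeLieAlgebra.of ℚ (⟨(i, j), h⟩ : DKGen n)
  else if h : 1 ≤ j ∧ j < i ∧ i ≤ n then FreeLieAlgebra.of ℚ (⟨(j, i), h⟩ : DKGen n)
  else 0

/-- The infinitesimal braid relations: `[t_{ij}, t_{kl}] = 0` for `{i,j} ∩ {k,l} = ∅` and
`[t_{ij}, t_{ik} + t_{jk}] = 0` for distinct `i, j, k`. -/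
noncomputable def DKRelations (n : ℕ) : Set (FreeLieAlgebra ℚ (DKGen n)) :=
  {x | (∃ i j k l : ℕ, i ≠ j ∧ k ≠ l ∧ i ≠ k ∧ i ≠ l ∧ j ≠ k ∧ j ≠ l ∧
          x = ⁅tFree n i j, tFree n k l⁆) ∨
       (∃ i j k : ℕ, i ≠ j ∧ i ≠ k ∧ j ≠ k ∧
          x = ⁅tFree n i j, tFree n i k + tFree n j k⁆)}

/-- The Lie ideal generated by the infinitesimal braid relations. -/
noncomputable def DKIdeal (n : ℕ) : LieIdeal ℚ (FreeLieAlgebra ℚ (DKGen n)) :=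
  LieSubmodule.lieSpan ℚ _ (DKRelations n)

/-- The Drinfeld–Kohno Lie algebra `t_n`, presented by the generators `t_{ij}` and the
infinitesimal braid relations. -/
noncomputable abbrev DKAlg (n : ℕ) : Type := FreeLieAlgebra ℚ (DKGen n) ⧸ DKIdeal n

/-- The class of the generator `t_{ij}` in `t_n`. -/
noncomputable def tDK (n : ℕ) (i j : ℕ) : DKAlg n :=
  LieSubmodule.Quotient.mk (N := DKIdeal n) (tFree n i j)


section AuxGeneric

variable {X Y L : Type*} [LieRing L] [LieAlgebra ℚ L]

lemma my_lie_sum {ι : Type*} (s : Finset ι) (x : L) (f : ι → L) :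
    ⁅x, ∑ i ∈ s, f i⁆ = ∑ i ∈ s, ⁅x, f i⁆ := by
  classical
  induction s using Finset.induction_on with
  | empty => simp
  | @insert _ _ h ih => simp [Finset.sum_insert h, lie_add, ih]

lemma my_sum_lie {ι : Type*} (s : Finset ι) (x : L) (f : ι → L) :
    ⁅∑ i ∈ s, f i, x⁆ = ∑ i ∈ s, ⁅f i, x⁆ := by
  classical
  induction s using Finset.induction_on with
  | empty => simp
  | @insert _ _ h ih => simp [Finset.sum_insert h, add_lie, ih]

lemma free_mem_lieSpan (a : FreeLieAlgebra ℚ X) :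
    a ∈ LieSubalgebra.lieSpan ℚ (FreeLieAlgebra ℚ X) (Set.range (FreeLieAlgebra.of ℚ)) := by
  set K := LieSubalgebra.lieSpan ℚ (FreeLieAlgebra ℚ X) (Set.range (FreeLieAlgebra.of ℚ)) with hK
  let g : FreeLieAlgebra ℚ X →ₗ⁅ℚ⁆ K :=
    FreeLieAlgebra.lift ℚ fun x =>
      (⟨FreeLieAlgebra.of ℚ x, LieSubalgebra.subset_lieSpan (Set.mem_range_self x)⟩ : K)
  have h : K.incl.comp g = LieHom.id := by
    apply FreeLieAlgebra.hom_ext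
    intro x
    simp only [LieHom.comp_apply, LieHom.id_apply, g, FreeLieAlgebra.lift_of_apply,
      LieSubalgebra.coe_incl]
  have h2 : K.incl (g a) = a := by
    have := DFunLike.congr_fun h a
    simpa using this
  rw [← h2]
  exact (g a).2

lemma lie_free_right (F : FreeLieAlgebra ℚ Y →ₗ⁅ℚ⁆ L) (c : L)
    (hc : ∀ y, ⁅c, F (FreeLieAlgebra.of ℚ y)⁆ = 0) (b : FreeLieAlgebra ℚ Y) : ⁅c, F b⁆ = 0 := by
  refine LieSubalgebra.lieSpan_induction ℚ (p := fun z _ => ⁅c, F z⁆ = 0)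
    ?_ ?_ ?_ ?_ ?_ (free_mem_lieSpan b)
  · rintro _ ⟨y, rfl⟩; exact hc y
  · simp
  · intro x y _ _ hx hy; rw [map_add F, lie_add, hx, hy, add_zero]
  · intro r x _ hx; rw [map_smul F, lie_smul, hx, smul_zero]
  · intro x y _ _ hx hy; rw [F.map_lie, leibniz_lie, hx, hy, zero_lie, lie_zero, add_zero]

lemma lie_free_left (F : FreeLieAlgebra ℚ Y →ₗ⁅ℚ⁆ L) (c : L)
    (hc : ∀ y, ⁅F (FreeLieAlgebra.of ℚ y), c⁆ = 0) (b : FreeLieAlgebra ℚ Y) : ⁅F b, c⁆ = 0 := by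
  rw [← lie_skew, lie_free_right F c (fun y => by rw [← lie_skew, hc, neg_zero]) b, neg_zero]

/-- Lift of a Lie algebra morphism to a quotient by an ideal contained in its kernel. -/
noncomputable def LieIdealLift {L' : Type*} [LieRing L'] [LieAlgebra ℚ L']
    (I : LieIdeal ℚ L') (F : L' →ₗ⁅ℚ⁆ L) (h : ∀ x ∈ I, F x = 0) :
    (L' ⧸ I) →ₗ⁅ℚ⁆ L :=
  { Submodule.liftQ I.toSubmodule F.toLinearMap (fun x hx => h x hx) with
    map_lie' := by
      rintro ⟨x⟩ ⟨y⟩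
      exact F.map_lie x y }

lemma LieIdealLift_mk {L' : Type*} [LieRing L'] [LieAlgebra ℚ L']
    (I : LieIdeal ℚ L') (F : L' →ₗ⁅ℚ⁆ L) (h : ∀ x ∈ I, F x = 0) (x : L') :
    LieIdealLift I F h (LieSubmodule.Quotient.mk (N := I) x) = F x := rfl

end AuxGeneric

section DKDev

set_option linter.unusedSectionVars false

lemma tFree_comm (n i j : ℕ) : tFree n i j = tFree n j i := by
  unfold tFree
  rcases Nat.lt_trichotomy i j with h | h | h
  · by_cases hr : 1 ≤ i ∧ i < j ∧ j ≤ n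
    · rw [dif_pos hr, dif_neg (by omega), dif_pos hr]
    · rw [dif_neg hr, dif_neg (by omega), dif_neg (by omega), dif_neg hr]
  · subst h; rfl
  · by_cases hr : 1 ≤ j ∧ j < i ∧ i ≤ n
    · rw [dif_neg (by omega), dif_pos hr, dif_pos hr]
    · rw [dif_neg (by omega), dif_neg hr, dif_neg hr, dif_neg (by omega)]

lemma tDK_comm (n i j : ℕ) : tDK n i j = tDK n j i := by rw [tDK, tDK, tFree_comm]

lemma rel_disjoint {n : ℕ} {i j k l : ℕ} (hij : i ≠ j) (hkl : k ≠ l) (hik : i ≠ k)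
    (hil : i ≠ l) (hjk : j ≠ k) (hjl : j ≠ l) : ⁅tDK n i j, tDK n k l⁆ = 0 := by
  rw [tDK, tDK, ← LieSubmodule.Quotient.mk_bracket, LieSubmodule.Quotient.mk_eq_zero']
  exact LieSubmodule.subset_lieSpan (Or.inl ⟨i, j, k, l, hij, hkl, hik, hil, hjk, hjl, rfl⟩)

lemma rel_triple {n : ℕ} {i j k : ℕ} (hij : i ≠ j) (hik : i ≠ k) (hjk : j ≠ k) :
    ⁅tDK n i j, tDK n i k + tDK n j k⁆ = 0 := by
  have hadd : tDK n i k + tDK n j k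
      = LieSubmodule.Quotient.mk (N := DKIdeal n) (tFree n i k + tFree n j k) :=
    (Submodule.Quotient.mk_add _).symm
  rw [tDK, hadd, ← LieSubmodule.Quotient.mk_bracket, LieSubmodule.Quotient.mk_eq_zero']
  exact LieSubmodule.subset_lieSpan (Or.inr ⟨i, j, k, hij, hik, hjk, rfl⟩)

variable (n m : ℕ)

/-- Value of the insertion map on a generator of `t_n`. -/
noncomputable def insGen (p : DKGen n) : DKAlg (n + m - 1) :=
  if p.1.1 = 1 then ∑ l ∈ Finset.Icc 1 m, tDK (n + m - 1) l (p.1.2 + m - 1)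
  else tDK (n + m - 1) (p.1.1 + m - 1) (p.1.2 + m - 1)

noncomputable def insF : FreeLieAlgebra ℚ (DKGen n) →ₗ⁅ℚ⁆ DKAlg (n + m - 1) :=
  FreeLieAlgebra.lift ℚ (insGen n m)

/-- Symmetrized, totalized value of the insertion map on `tFree n i j`. -/
noncomputable def Tins (i j : ℕ) : DKAlg (n + m - 1) :=
  if 1 ≤ i ∧ i ≠ j ∧ i ≤ n ∧ 1 ≤ j ∧ j ≤ n then
    if i = 1 ∨ j = 1 then ∑ l ∈ Finset.Icc 1 m, tDK (n + m - 1) l (max i j + m - 1)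
    else tDK (n + m - 1) (i + m - 1) (j + m - 1)
  else 0

lemma Tins_zero {i j : ℕ} (h : ¬(1 ≤ i ∧ i ≠ j ∧ i ≤ n ∧ 1 ≤ j ∧ j ≤ n)) :
    Tins n m i j = 0 := by rw [Tins, if_neg h]

lemma Tins_sum {i j : ℕ} (hi : i = 1) (hj : 2 ≤ j) (hjn : j ≤ n) :
    Tins n m i j = ∑ l ∈ Finset.Icc 1 m, tDK (n + m - 1) l (j + m - 1) := by
  have hmax : max i j = j := by omega
  rw [Tins, if_pos (by omega), if_pos (Or.inl hi), hmax]

lemma Tins_tDK {i j : ℕ} (hi : 2 ≤ i) (hj : 2 ≤ j) (hij : i ≠ j) (hin : i ≤ n) (hjn : j ≤ n) :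
    Tins n m i j = tDK (n + m - 1) (i + m - 1) (j + m - 1) := by
  rw [Tins, if_pos (by omega), if_neg (by omega)]

lemma Tins_comm (i j : ℕ) : Tins n m i j = Tins n m j i := by
  unfold Tins
  by_cases hv : 1 ≤ i ∧ i ≠ j ∧ i ≤ n ∧ 1 ≤ j ∧ j ≤ n
  · rw [if_pos hv, if_pos (show 1 ≤ j ∧ j ≠ i ∧ j ≤ n ∧ 1 ≤ i ∧ i ≤ n by omega)]
    by_cases h1 : i = 1 ∨ j = 1
    · rw [if_pos h1, if_pos h1.symm, max_comm]
    · rw [if_neg h1, if_neg (fun hc => h1 hc.symm), tDK_comm]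
  · rw [if_neg hv, if_neg (show ¬(1 ≤ j ∧ j ≠ i ∧ j ≤ n ∧ 1 ≤ i ∧ i ≤ n) by omega)]

lemma insF_tFree (i j : ℕ) : insF n m (tFree n i j) = Tins n m i j := by
  unfold tFree
  by_cases h1 : 1 ≤ i ∧ i < j ∧ j ≤ n
  · rw [dif_pos h1]
    erw [insF, FreeLieAlgebra.lift_of_apply]
    show (if i = 1 then ∑ l ∈ Finset.Icc 1 m, tDK (n + m - 1) l (j + m - 1)
      else tDK (n + m - 1) (i + m - 1) (j + m - 1)) = Tins n m i j
    by_cases hi : i = 1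
    · rw [if_pos hi, Tins_sum n m hi (by omega) (by omega)]
    · rw [if_neg hi, Tins_tDK n m (by omega) (by omega) (by omega) (by omega) (by omega)]
  · by_cases h2 : 1 ≤ j ∧ j < i ∧ i ≤ n
    · rw [dif_neg h1, dif_pos h2]
      erw [insF, FreeLieAlgebra.lift_of_apply]
      show (if j = 1 then ∑ l ∈ Finset.Icc 1 m, tDK (n + m - 1) l (i + m - 1)
        else tDK (n + m - 1) (j + m - 1) (i + m - 1)) = Tins n m i j
      rw [Tins_comm]
      by_cases hj : j = 1
      · rw [if_pos hj, Tins_sum n m hj (by omega) (by omega)]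
      · rw [if_neg hj, Tins_tDK n m (by omega) (by omega) (by omega) (by omega) (by omega)]
    · rw [dif_neg h1, dif_neg h2, Tins_zero n m (by omega), map_zero]

end DKDev

section DKDev2

variable (n m : ℕ)

lemma aux_sum_disj {P K L : ℕ} (hP : m < P) (hK : m < K) (hL : m < L)
    (hPK : P ≠ K) (hPL : P ≠ L) (hKL : K ≠ L) :
    ⁅∑ a ∈ Finset.Icc 1 m, tDK (n + m - 1) a P, tDK (n + m - 1) K L⁆ = 0 := by
  rw [my_sum_lie]
  refine Finset.sum_eq_zero fun a ha => ?_
  simp only [Finset.mem_Icc] at ha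
  exact rel_disjoint (by omega) hKL (by omega) (by omega) hPK hPL

lemma aux_sum_one {P K L : ℕ} (hK : 1 ≤ K) (hKm : K ≤ m) (hL : 1 ≤ L) (hLm : L ≤ m)
    (hKL : K ≠ L) (hP : m < P) :
    ⁅∑ a ∈ Finset.Icc 1 m, tDK (n + m - 1) a P, tDK (n + m - 1) K L⁆ = 0 := by
  classical
  have hKmem : K ∈ Finset.Icc 1 m := by simp only [Finset.mem_Icc]; omega
  have hLmem : L ∈ (Finset.Icc 1 m).erase K := by
    simp only [Finset.mem_erase, Finset.mem_Icc]; omega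
  rw [← Finset.add_sum_erase _ _ hKmem, ← Finset.add_sum_erase _ _ hLmem, ← add_assoc,
    add_lie, add_lie]
  have h1 : ⁅tDK (n + m - 1) K P + tDK (n + m - 1) L P, tDK (n + m - 1) K L⁆ = 0 := by
    rw [← lie_skew, rel_triple hKL (by omega) (by omega), neg_zero]
  rw [← add_lie, h1, zero_add, my_sum_lie]
  refine Finset.sum_eq_zero fun a ha => ?_
  simp only [Finset.mem_erase, Finset.mem_Icc] at ha
  exact rel_disjoint (by omega) hKL ha.2.1 ha.1 (by omega) (by omega)

lemma aux_one_triple (hm : 1 ≤ m) {P Q : ℕ} (hP : m < P) (hQ : m < Q) (hPQ : P ≠ Q) :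
    ⁅∑ a ∈ Finset.Icc 1 m, tDK (n + m - 1) a P,
      (∑ b ∈ Finset.Icc 1 m, tDK (n + m - 1) b Q) + tDK (n + m - 1) P Q⁆ = 0 := by
  classical
  rw [my_sum_lie]
  refine Finset.sum_eq_zero fun a ha => ?_
  simp only [Finset.mem_Icc] at ha
  have hamem : a ∈ Finset.Icc 1 m := by simp only [Finset.mem_Icc]; omega
  rw [← Finset.add_sum_erase _ _ hamem, add_right_comm, lie_add, my_lie_sum]
  have h1 : ⁅tDK (n + m - 1) a P, tDK (n + m - 1) a Q + tDK (n + m - 1) P Q⁆ = 0 :=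
    rel_triple (by omega) (by omega) hPQ
  rw [h1, zero_add]
  refine Finset.sum_eq_zero fun b hb => ?_
  simp only [Finset.mem_erase, Finset.mem_Icc] at hb
  exact rel_disjoint (by omega) (by omega) hb.1.symm (by omega) (by omega) hPQ

lemma aux_last_triple {P Q : ℕ} (hP : m < P) (hQ : m < Q) (hPQ : P ≠ Q) :
    ⁅tDK (n + m - 1) P Q,
      (∑ a ∈ Finset.Icc 1 m, tDK (n + m - 1) a P) +
        ∑ a ∈ Finset.Icc 1 m, tDK (n + m - 1) a Q⁆ = 0 := by
  rw [← Finset.sum_add_distrib, my_lie_sum]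
  refine Finset.sum_eq_zero fun a ha => ?_
  simp only [Finset.mem_Icc] at ha
  rw [tDK_comm _ a P, tDK_comm _ a Q]
  exact rel_triple hPQ (by omega) (by omega)

lemma key1 (hm : 1 ≤ m) {i j k l : ℕ} (hij : i ≠ j) (hkl : k ≠ l) (hik : i ≠ k)
    (hil : i ≠ l) (hjk : j ≠ k) (hjl : j ≠ l) :
    ⁅Tins n m i j, Tins n m k l⁆ = 0 := by
  have main : ∀ i j k l : ℕ, i ≠ j → k ≠ l → i ≠ k → i ≠ l → j ≠ k → j ≠ l →
      k ≠ 1 → l ≠ 1 → ⁅Tins n m i j, Tins n m k l⁆ = 0 := by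
    intro i j k l hij hkl hik hil hjk hjl hk1 hl1
    by_cases hv1 : 1 ≤ i ∧ i ≠ j ∧ i ≤ n ∧ 1 ≤ j ∧ j ≤ n
    swap
    · rw [Tins_zero n m hv1, zero_lie]
    by_cases hv2 : 1 ≤ k ∧ k ≠ l ∧ k ≤ n ∧ 1 ≤ l ∧ l ≤ n
    swap
    · rw [Tins_zero n m hv2, lie_zero]
    rw [Tins_tDK n m (by omega) (by omega) hkl (by omega) (by omega)]
    by_cases h1 : i = 1 ∨ j = 1
    · rw [Tins, if_pos hv1, if_pos h1]
      exact aux_sum_disj n m (P := max i j + m - 1) (K := k + m - 1) (L := l + m - 1)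
        (by omega) (by omega) (by omega) (by omega) (by omega) (by omega)
    · rw [Tins_tDK n m (by omega) (by omega) hij (by omega) (by omega)]
      exact rel_disjoint (by omega) (by omega) (by omega) (by omega) (by omega) (by omega)
  by_cases hkl1 : k ≠ 1 ∧ l ≠ 1
  · exact main i j k l hij hkl hik hil hjk hjl hkl1.1 hkl1.2
  · have hij1 : i ≠ 1 ∧ j ≠ 1 := by omega
    rw [← lie_skew, main k l i j hkl hij (by omega) (by omega) (by omega) (by omega)
      hij1.1 hij1.2, neg_zero]

lemma key2 (hm : 1 ≤ m) {i j k : ℕ} (hij : i ≠ j) (hik : i ≠ k) (hjk : j ≠ k) :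
    ⁅Tins n m i j, Tins n m i k + Tins n m j k⁆ = 0 := by
  by_cases hi : 1 ≤ i ∧ i ≤ n
  swap
  · rw [Tins_zero n m (i := i) (j := j) (by omega), zero_lie]
  by_cases hj : 1 ≤ j ∧ j ≤ n
  swap
  · rw [Tins_zero n m (i := i) (j := j) (by omega), zero_lie]
  by_cases hk : 1 ≤ k ∧ k ≤ n
  swap
  · rw [Tins_zero n m (i := i) (j := k) (by omega), Tins_zero n m (i := j) (j := k) (by omega),
      add_zero, lie_zero]
  by_cases hi1 : i = 1
  · have hj2 : 2 ≤ j := by omega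
    have hk2 : 2 ≤ k := by omega
    rw [Tins_sum n m hi1 hj2 hj.2, Tins_sum n m hi1 hk2 hk.2,
      Tins_tDK n m hj2 hk2 hjk hj.2 hk.2]
    exact aux_one_triple n m hm (P := j + m - 1) (Q := k + m - 1)
      (by omega) (by omega) (by omega)
  by_cases hj1 : j = 1
  · have hi2 : 2 ≤ i := by omega
    have hk2 : 2 ≤ k := by omega
    rw [Tins_comm n m i j, Tins_sum n m hj1 hi2 hi.2,
      Tins_tDK n m hi2 hk2 hik hi.2 hk.2, Tins_sum n m hj1 hk2 hk.2,
      add_comm (tDK (n + m - 1) (i + m - 1) (k + m - 1))]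
    exact aux_one_triple n m hm (P := i + m - 1) (Q := k + m - 1)
      (by omega) (by omega) (by omega)
  by_cases hk1 : k = 1
  · have hi2 : 2 ≤ i := by omega
    have hj2 : 2 ≤ j := by omega
    rw [Tins_tDK n m hi2 hj2 hij hi.2 hj.2, Tins_comm n m i k, Tins_comm n m j k,
      Tins_sum n m hk1 hi2 hi.2, Tins_sum n m hk1 hj2 hj.2]
    exact aux_last_triple n m (P := i + m - 1) (Q := j + m - 1)
      (by omega) (by omega) (by omega)
  · rw [Tins_tDK n m (by omega) (by omega) hij hi.2 hj.2,
      Tins_tDK n m (by omega) (by omega) hik hi.2 hk.2,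
      Tins_tDK n m (by omega) (by omega) hjk hj.2 hk.2]
    exact rel_triple (by omega) (by omega) (by omega)

end DKDev2

section DKDev3

variable (n m : ℕ)

/-- Value of the second (identity-like) map on a generator of `t_m`. -/
noncomputable def ins2Gen (p : DKGen m) : DKAlg (n + m - 1) :=
  tDK (n + m - 1) p.1.1 p.1.2

noncomputable def ins2F : FreeLieAlgebra ℚ (DKGen m) →ₗ⁅ℚ⁆ DKAlg (n + m - 1) :=
  FreeLieAlgebra.lift ℚ (ins2Gen n m)

noncomputable def Tm (i j : ℕ) : DKAlg (n + m - 1) :=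
  if 1 ≤ i ∧ i ≠ j ∧ i ≤ m ∧ 1 ≤ j ∧ j ≤ m then tDK (n + m - 1) i j else 0

lemma Tm_zero {i j : ℕ} (h : ¬(1 ≤ i ∧ i ≠ j ∧ i ≤ m ∧ 1 ≤ j ∧ j ≤ m)) :
    Tm n m i j = 0 := by rw [Tm, if_neg h]

lemma Tm_tDK {i j : ℕ} (h : 1 ≤ i ∧ i ≠ j ∧ i ≤ m ∧ 1 ≤ j ∧ j ≤ m) :
    Tm n m i j = tDK (n + m - 1) i j := by rw [Tm, if_pos h]

lemma ins2F_tFree (i j : ℕ) : ins2F n m (tFree m i j) = Tm n m i j := by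
  unfold tFree
  by_cases h1 : 1 ≤ i ∧ i < j ∧ j ≤ m
  · rw [dif_pos h1]; erw [ins2F, FreeLieAlgebra.lift_of_apply]
    show tDK (n + m - 1) i j = Tm n m i j
    rw [Tm_tDK n m (by omega)]
  · by_cases h2 : 1 ≤ j ∧ j < i ∧ i ≤ m
    · rw [dif_neg h1, dif_pos h2]; erw [ins2F, FreeLieAlgebra.lift_of_apply]
      show tDK (n + m - 1) j i = Tm n m i j
      rw [Tm_tDK n m (by omega), tDK_comm]
    · rw [dif_neg h1, dif_neg h2, Tm_zero n m (by omega), map_zero]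

lemma keym1 {i j k l : ℕ} (hij : i ≠ j) (hkl : k ≠ l) (hik : i ≠ k)
    (hil : i ≠ l) (hjk : j ≠ k) (hjl : j ≠ l) :
    ⁅Tm n m i j, Tm n m k l⁆ = 0 := by
  by_cases hv1 : 1 ≤ i ∧ i ≠ j ∧ i ≤ m ∧ 1 ≤ j ∧ j ≤ m
  swap
  · rw [Tm_zero n m hv1, zero_lie]
  by_cases hv2 : 1 ≤ k ∧ k ≠ l ∧ k ≤ m ∧ 1 ≤ l ∧ l ≤ m
  swap
  · rw [Tm_zero n m hv2, lie_zero]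
  rw [Tm_tDK n m hv1, Tm_tDK n m hv2]
  exact rel_disjoint hij hkl hik hil hjk hjl

lemma keym2 {i j k : ℕ} (hij : i ≠ j) (hik : i ≠ k) (hjk : j ≠ k) :
    ⁅Tm n m i j, Tm n m i k + Tm n m j k⁆ = 0 := by
  by_cases hi : 1 ≤ i ∧ i ≤ m
  swap
  · rw [Tm_zero n m (i := i) (j := j) (by omega), zero_lie]
  by_cases hj : 1 ≤ j ∧ j ≤ m
  swap
  · rw [Tm_zero n m (i := i) (j := j) (by omega), zero_lie]
  by_cases hk : 1 ≤ k ∧ k ≤ m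
  swap
  · rw [Tm_zero n m (i := i) (j := k) (by omega), Tm_zero n m (i := j) (j := k) (by omega),
      add_zero, lie_zero]
  rw [Tm_tDK n m (by omega), Tm_tDK n m (by omega), Tm_tDK n m (by omega)]
  exact rel_triple hij hik hjk

lemma insF_ker (hm : 1 ≤ m) : DKIdeal n ≤ (insF n m).ker := by
  rw [DKIdeal, LieSubmodule.lieSpan_le]
  rintro x (⟨i, j, k, l, hij, hkl, hik, hil, hjk, hjl, rfl⟩ | ⟨i, j, k, hij, hik, hjk, rfl⟩)
  · rw [SetLike.mem_coe, LieHom.mem_ker, LieHom.map_lie, insF_tFree, insF_tFree]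
    exact key1 n m hm hij hkl hik hil hjk hjl
  · rw [SetLike.mem_coe, LieHom.mem_ker, LieHom.map_lie, map_add, insF_tFree,
      insF_tFree, insF_tFree]
    exact key2 n m hm hij hik hjk

lemma ins2F_ker : DKIdeal m ≤ (ins2F n m).ker := by
  rw [DKIdeal, LieSubmodule.lieSpan_le]
  rintro x (⟨i, j, k, l, hij, hkl, hik, hil, hjk, hjl, rfl⟩ | ⟨i, j, k, hij, hik, hjk, rfl⟩)
  · rw [SetLike.mem_coe, LieHom.mem_ker, LieHom.map_lie, ins2F_tFree, ins2F_tFree]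
    exact keym1 n m hij hkl hik hil hjk hjl
  · rw [SetLike.mem_coe, LieHom.mem_ker, LieHom.map_lie, map_add, ins2F_tFree,
      ins2F_tFree, ins2F_tFree]
    exact keym2 n m hij hik hjk

lemma cross (hm : 1 ≤ m) (a : FreeLieAlgebra ℚ (DKGen n)) (b : FreeLieAlgebra ℚ (DKGen m)) :
    ⁅insF n m a, ins2F n m b⁆ = 0 := by
  refine lie_free_left (insF n m) _ (fun p => ?_) a
  refine lie_free_right (ins2F n m) _ (fun q => ?_) b
  obtain ⟨⟨i, j⟩, hp⟩ := p
  obtain ⟨⟨k, l⟩, hq⟩ := q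
  erw [insF, ins2F, FreeLieAlgebra.lift_of_apply, FreeLieAlgebra.lift_of_apply]
  show ⁅(if i = 1 then ∑ a ∈ Finset.Icc 1 m, tDK (n + m - 1) a (j + m - 1)
      else tDK (n + m - 1) (i + m - 1) (j + m - 1)), tDK (n + m - 1) k l⁆ = 0
  obtain ⟨hp1, hp2, hp3⟩ := hp
  obtain ⟨hq1, hq2, hq3⟩ := hq
  by_cases hi : i = 1
  · rw [if_pos hi]
    exact aux_sum_one n m hq1 (by omega) (by omega) hq3 (by omega) (by omega)
  · rw [if_neg hi]
    exact rel_disjoint (by omega) (by omega) (by omega) (by omega) (by omega) (by omega)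

end DKDev3

/-- The operadic insertion formula `∘₁` (insertion of `m` points at the
first point) extends to a well-defined morphism of Lie algebras
`t_n ⊕ t_m → t_{n+m-1}`: it sends `t_{ij}` (for `1 < i < j ≤ n`) to `t_{i+m-1, j+m-1}`,
`t_{1j}` to `Σ_{l=1}^m t_{l, j+m-1}`, and the generators `t_{ij}` of `t_m` to `t_{ij}`. -/
theorem drinfeldKohno_insertion (n m : ℕ) (hn : 2 ≤ n) (hm : 1 ≤ m) :
    ∃ f : (DKAlg n × DKAlg m) →ₗ⁅ℚ⁆ DKAlg (n + m - 1),
      (∀ i j : ℕ, 1 < i → i < j → j ≤ n →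
        f (tDK n i j, 0) = tDK (n + m - 1) (i + m - 1) (j + m - 1)) ∧
      (∀ j : ℕ, 1 < j → j ≤ n →
        f (tDK n 1 j, 0) = ∑ l ∈ Finset.Icc 1 m, tDK (n + m - 1) l (j + m - 1)) ∧
      (∀ i j : ℕ, 1 ≤ i → i < j → j ≤ m →
        f (0, tDK m i j) = tDK (n + m - 1) i j) := by
  classical
  have hker1 : ∀ x ∈ DKIdeal n, insF n m x = 0 := fun x hx =>
    LieHom.mem_ker.mp (insF_ker n m hm hx)
  have hker2 : ∀ x ∈ DKIdeal m, ins2F n m x = 0 := fun x hx =>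
    LieHom.mem_ker.mp (ins2F_ker n m hx)
  let f₁ : DKAlg n →ₗ⁅ℚ⁆ DKAlg (n + m - 1) := LieIdealLift (DKIdeal n) (insF n m) hker1
  let f₂ : DKAlg m →ₗ⁅ℚ⁆ DKAlg (n + m - 1) := LieIdealLift (DKIdeal m) (ins2F n m) hker2
  have hcomm : ∀ (x : DKAlg n) (y : DKAlg m), ⁅f₁ x, f₂ y⁆ = 0 := by
    intro x y
    refine Quotient.inductionOn₂' x y fun a b => ?_
    exact cross n m hm a b
  have hcomm' : ∀ (y : DKAlg m) (x : DKAlg n), ⁅f₂ y, f₁ x⁆ = 0 := by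
    intro y x; rw [← lie_skew, hcomm, neg_zero]
  refine ⟨{ toLinearMap := f₁.toLinearMap.comp (LinearMap.fst ℚ _ _) +
      f₂.toLinearMap.comp (LinearMap.snd ℚ _ _), map_lie' := ?_ }, ?_, ?_, ?_⟩
  · intro x y
    show f₁ ⁅x.1, y.1⁆ + f₂ ⁅x.2, y.2⁆ = ⁅f₁ x.1 + f₂ x.2, f₁ y.1 + f₂ y.2⁆
    rw [lie_add, add_lie, add_lie, f₁.map_lie, f₂.map_lie, hcomm, hcomm', add_zero, zero_add]
  · intro i j hi hij hjn
    show f₁ (tDK n i j) + f₂ 0 = _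
    rw [map_zero f₂, add_zero]
    show insF n m (tFree n i j) = _
    rw [insF_tFree, Tins_tDK n m (by omega) (by omega) (by omega) (by omega) (by omega)]
  · intro j hj hjn
    show f₁ (tDK n 1 j) + f₂ 0 = _
    rw [map_zero f₂, add_zero]
    show insF n m (tFree n 1 j) = _
    rw [insF_tFree, Tins_sum n m rfl (by omega) (by omega)]
  · intro i j hi hij hjm
    show f₁ 0 + f₂ (tDK m i j) = _
    rw [map_zero f₁, zero_add]
    show ins2F n m (tFree m i j) = _
    rw [ins2F_tFree, Tm_tDK n m (by omega)]
end
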